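/- arXiv:2503.05178 — 3 statements merged into one kernel-verified Lean document; each statement's English description precedes it below -/
import Mathlib

section
/- Let P be a finite set of points in general position in the plane containing b blue points and b - 3t red points, where t is a nonnegative integer with 3t ≤ b. Then there exist t triangles, each with its three vertices at distinct blue points of P (no blue point used by more than one triangle), such that no triangle contains a red point of P in its interior or on its boundary. -/
/-!
Let `p` be the blue point that is highest in a generic direction. The other points below it lie
in an open half-plane bounded by a line through `p`, so the angle seen from `p` orders them
linearly. Give every other blue point `q` the number of red points that precede `q` in this
order; these numbers lie in `0, …, |R|`, while there are at least `|R| + 2` other blue points, so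
two of them, `a` and `b`, get the same number. A red point in the triangle `p a b` would either be
collinear with two of its vertices or lie strictly between `a` and `b` in the angular order and
be counted for one but not the other. Removing `p, a, b` and inducting on `t` gives the theorem.
-/

abbrev Pt := ℝ × ℝ

/-- A finite planar point set is in general position if no three of its points are collinear. -/
def GenPos (P : Finset Pt) : Prop :=
  ∀ p ∈ P, ∀ q ∈ P, ∀ r ∈ P, p ≠ q → p ≠ r → q ≠ r → ¬ Collinear ℝ ({p, q, r} : Set Pt)

theorem exists_sub_eq_smul_add_smul_of_mem_convexHull {E : Type*} [AddCommGroup E] [Module ℝ E]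
    {p a b z : E} (hz : z ∈ convexHull ℝ {p, a, b}) :
    ∃ β γ : ℝ, 0 ≤ β ∧ 0 ≤ γ ∧ z - p = β • (a - p) + γ • (b - p) := by
  rw [convexHull_insert (Set.insert_nonempty _ _), convexHull_pair, mem_convexJoin] at hz
  obtain ⟨q, rfl, x, ⟨μ, ν, hμ, hν, hμν, rfl⟩, α, s, -, hs, hαs, rfl⟩ := hz
  obtain rfl : α = 1 - s := by linarith
  obtain rfl : μ = 1 - ν := by linarith
  exact ⟨s * (1 - ν), s * ν, mul_nonneg hs hμ, mul_nonneg hs hν, by module⟩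

def cross (p a b : Pt) : ℝ := (a.1 - p.1) * (b.2 - p.2) - (a.2 - p.2) * (b.1 - p.1)

theorem cross_swap (p a b : Pt) : cross p b a = -cross p a b := by
  unfold cross; ring

theorem collinear_of_cross_eq_zero {p a b : Pt} (hap : a ≠ p) (h : cross p a b = 0) :
    Collinear ℝ ({p, a, b} : Set Pt) := by
  have hd : (a.1 - p.1) ^ 2 + (a.2 - p.2) ^ 2 ≠ 0 := by
    intro h0
    exact hap (Prod.ext (by nlinarith) (by nlinarith))
  rw [collinear_iff_of_mem (Set.mem_insert p _)]
  refine ⟨a - p, ?_⟩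
  simp only [Set.mem_insert_iff, Set.mem_singleton_iff]
  rintro q (rfl | rfl | rfl)
  · exact ⟨0, by simp⟩
  · exact ⟨1, by simp⟩
  · -- the orthogonal projection of `q - p` onto the line through `p` and `a`
    refine ⟨((q.1 - p.1) * (a.1 - p.1) + (q.2 - p.2) * (a.2 - p.2)) /
      ((a.1 - p.1) ^ 2 + (a.2 - p.2) ^ 2), Prod.ext ?_ ?_⟩ <;>
    simp only [vadd_eq_add, Prod.fst_add, Prod.snd_add, Prod.smul_fst, Prod.smul_snd,
        Prod.fst_sub, Prod.snd_sub, smul_eq_mul] <;> field_simp <;> unfold cross at h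
    · linear_combination -(a.2 - p.2) * h
    · linear_combination (a.1 - p.1) * h

theorem GenPos.mono {P Q : Finset Pt} (h : P ⊆ Q) (hQ : GenPos Q) : GenPos P :=
  fun p hp q hq r hr => hQ p (h hp) q (h hq) r (h hr)

theorem GenPos.cross_ne_zero {P : Finset Pt} (hP : GenPos P) {p a b : Pt} (hp : p ∈ P)
    (ha : a ∈ P) (hb : b ∈ P) (hpa : p ≠ a) (hpb : p ≠ b) (hab : a ≠ b) : cross p a b ≠ 0 :=
  fun h => hP p hp a ha b hb hpa hpb hab (collinear_of_cross_eq_zero hpa.symm h)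

def level (c : ℝ) (q : Pt) : ℝ := q.1 + c * q.2

theorem exists_injOn_level (P : Finset Pt) : ∃ c : ℝ, Set.InjOn (level c) P := by
  -- avoid the finitely many slopes `(q.1 - p.1) / (p.2 - q.2)` spanned by pairs of points of `P`
  obtain ⟨c, hc⟩ := Infinite.exists_notMem_finset
    ((P ×ˢ P).image fun pq => (pq.2.1 - pq.1.1) / (pq.1.2 - pq.2.2))
  refine ⟨c, fun p hp q hq h => ?_⟩
  unfold level at h
  by_cases h2 : p.2 = q.2
  · exact Prod.ext (by rw [h2] at h; linarith) h2
  · refine absurd (Finset.mem_image.2 ⟨(q, p), Finset.mem_product.2 ⟨hq, hp⟩, ?_⟩) hc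
    rw [div_eq_iff (sub_ne_zero.2 (Ne.symm h2))]
    linarith

/-- Seen from `p`, the points strictly below its level lie in an open half-plane, so
`0 < cross p u v` is a strict order on them. -/
theorem cross_pos_trans {c : ℝ} {p u v w : Pt} (hu : level c u < level c p)
    (hv : level c v < level c p) (hw : level c w < level c p)
    (huv : 0 < cross p u v) (hvw : 0 < cross p v w) : 0 < cross p u w := by
  have key : cross p u w * (level c v - level c p) =
      cross p u v * (level c w - level c p) + cross p v w * (level c u - level c p) := by
    unfold cross level; ring
  nlinarith [mul_neg_of_pos_of_neg huv (sub_neg.2 hw), mul_neg_of_pos_of_neg hvw (sub_neg.2 hu)]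

noncomputable def angularPredecessors (c : ℝ) (p : Pt) (R : Finset Pt) (q : Pt) : Finset Pt :=
  R.filter fun x => level c x < level c p ∧ 0 < cross p x q

theorem angularPredecessors_mono {c : ℝ} {p a b : Pt} (R : Finset Pt)
    (ha : level c a < level c p) (hb : level c b < level c p) (hab : 0 < cross p a b) :
    angularPredecessors c p R a ⊆ angularPredecessors c p R b := by
  intro x hx
  simp only [angularPredecessors, Finset.mem_filter] at hx ⊢
  exact ⟨hx.1, hx.2.1, cross_pos_trans hx.2.1 ha hb hx.2.2 hab⟩

theorem card_angularPredecessors_lt {c : ℝ} {p a b z : Pt} {R : Finset Pt} (hzR : z ∈ R)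
    (ha : level c a < level c p) (hb : level c b < level c p) (hz : level c z < level c p)
    (hab : 0 < cross p a b) (haz : 0 < cross p a z) (hzb : 0 < cross p z b) :
    (angularPredecessors c p R a).card < (angularPredecessors c p R b).card := by
  refine Finset.card_lt_card ((Finset.ssubset_iff_of_subset
    (angularPredecessors_mono R ha hb hab)).2 ⟨z, Finset.mem_filter.2 ⟨hzR, hz, hzb⟩, ?_⟩)
  intro h
  have := (Finset.mem_filter.1 h).2.2
  rw [cross_swap] at this
  linarith

theorem notMem_convexHull_of_card_angularPredecessors_eq {B R : Finset Pt} (hdisj : Disjoint B R)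
    (hgp : GenPos (B ∪ R)) {c : ℝ} {p a b z : Pt} (hp : p ∈ B) (ha : a ∈ B) (hb : b ∈ B)
    (hzR : z ∈ R) (ha' : level c a < level c p) (hb' : level c b < level c p)
    (hab : 0 < cross p a b)
    (hcard : (angularPredecessors c p R a).card = (angularPredecessors c p R b).card) :
    z ∉ convexHull ℝ {p, a, b} := by
  intro hz
  obtain ⟨β, γ, hβ, hγ, hzp⟩ := exists_sub_eq_smul_add_smul_of_mem_convexHull hz
  have e1 : z.1 - p.1 = β * (a.1 - p.1) + γ * (b.1 - p.1) := by
    simpa using congrArg Prod.fst hzp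
  have e2 : z.2 - p.2 = β * (a.2 - p.2) + γ * (b.2 - p.2) := by
    simpa using congrArg Prod.snd hzp
  have hbz : cross p b z = -(β * cross p a b) := by
    unfold cross; linear_combination (b.1 - p.1) * e2 - (b.2 - p.2) * e1
  have haz : cross p a z = γ * cross p a b := by
    unfold cross; linear_combination (a.1 - p.1) * e2 - (a.2 - p.2) * e1
  have hne : ∀ x ∈ B, x ≠ z := fun x hx h => Finset.disjoint_left.1 hdisj hx (h ▸ hzR)
  rcases hβ.eq_or_lt with rfl | hβ
  · refine hgp.cross_ne_zero (Finset.mem_union_left _ hp) (Finset.mem_union_left _ hb)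
      (Finset.mem_union_right _ hzR) (fun h => (h ▸ hb').false) (hne p hp) (hne b hb) ?_
    simp [hbz]
  rcases hγ.eq_or_lt with rfl | hγ
  · refine hgp.cross_ne_zero (Finset.mem_union_left _ hp) (Finset.mem_union_left _ ha)
      (Finset.mem_union_right _ hzR) (fun h => (h ▸ ha').false) (hne p hp) (hne a ha) ?_
    simp [haz]
  -- `z` lies strictly inside the angle `a p b`
  have hz' : level c z < level c p := by
    have : level c z - level c p =
        β * (level c a - level c p) + γ * (level c b - level c p) := by
      unfold level; linear_combination e1 + c * e2
    nlinarith [mul_neg_of_pos_of_neg hβ (sub_neg.2 ha'), mul_neg_of_pos_of_neg hγ (sub_neg.2 hb')]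
  refine (card_angularPredecessors_lt hzR ha' hb' hz' hab ?_ ?_).ne hcard
  · rw [haz]; exact mul_pos hγ hab
  · rw [cross_swap, hbz, neg_neg]; exact mul_pos hβ hab

theorem exists_triangle_forall_notMem_convexHull {B R : Finset Pt} (hdisj : Disjoint B R)
    (hgp : GenPos (B ∪ R)) (hcard : R.card + 3 ≤ B.card) :
    ∃ s ⊆ B, s.card = 3 ∧ ∀ r ∈ R, r ∉ convexHull ℝ (s : Set Pt) := by
  obtain ⟨c, hc⟩ := exists_injOn_level B
  obtain ⟨p, hp, hmax⟩ := B.exists_max_image (level c) (Finset.card_pos.1 (by omega))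
  have hbelow : ∀ q ∈ B.erase p, level c q < level c p := fun q hq =>
    (hmax q (Finset.mem_of_mem_erase hq)).lt_of_ne fun h =>
      Finset.ne_of_mem_erase hq (hc (Finset.mem_of_mem_erase hq) hp h)
  -- pigeonhole: `B.erase p` has more points than there are possible cardinalities
  obtain ⟨a, ha, b, hb, hab, hcard⟩ := Finset.exists_ne_map_eq_of_card_lt_of_maps_to
    (t := Finset.range (R.card + 1)) (f := fun q => (angularPredecessors c p R q).card)
    (by rw [Finset.card_range, Finset.card_erase_of_mem hp]; omega)
    (fun q _ => Finset.mem_range_succ_iff.2 (Finset.card_filter_le _ _))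
  have haB := Finset.mem_of_mem_erase ha
  have hbB := Finset.mem_of_mem_erase hb
  wlog hcross : 0 < cross p a b generalizing a b
  · refine this b hb a ha hab.symm hcard.symm hbB haB ?_
    rw [cross_swap, neg_pos]
    exact (not_lt.1 hcross).lt_of_ne ((hgp.mono Finset.subset_union_left).cross_ne_zero hp haB hbB
      (Finset.ne_of_mem_erase ha).symm (Finset.ne_of_mem_erase hb).symm hab)
  refine ⟨{p, a, b}, ?_, Finset.card_eq_three.2 ⟨p, a, b, (Finset.ne_of_mem_erase ha).symm,
    (Finset.ne_of_mem_erase hb).symm, hab, rfl⟩, fun r hr => ?_⟩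
  · simp [Finset.insert_subset_iff, hp, haB, hbB]
  · push_cast
    exact notMem_convexHull_of_card_angularPredecessors_eq hdisj hgp hp haB hbB hr
      (hbelow a ha) (hbelow b hb) hcross hcard

def IsRedFreePacking (B R : Finset Pt) (T : Finset (Finset Pt)) : Prop :=
  (∀ s ∈ T, s ⊆ B ∧ s.card = 3) ∧
    (∀ s ∈ T, ∀ s' ∈ T, s ≠ s' → Disjoint s s') ∧
    (∀ s ∈ T, ∀ r ∈ R, r ∉ convexHull ℝ (↑s : Set Pt))

theorem IsRedFreePacking.insert {B R s : Finset Pt} {T : Finset (Finset Pt)}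
    (hT : IsRedFreePacking (B \ s) R T) (hsB : s ⊆ B) (hs : s.card = 3)
    (hsR : ∀ r ∈ R, r ∉ convexHull ℝ (↑s : Set Pt)) :
    s ∉ T ∧ IsRedFreePacking B R (insert s T) := by
  obtain ⟨hsub, hdisj, hfree⟩ := hT
  have hsT : ∀ s' ∈ T, Disjoint s s' := fun s' hs' =>
    Finset.disjoint_of_subset_right (hsub s' hs').1 Finset.disjoint_sdiff
  refine ⟨fun h => ?_, ?_, ?_, ?_⟩
  · have := (Finset.disjoint_self_iff_empty s).1 (hsT s h)
    simp [this] at hs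
  · simp only [Finset.forall_mem_insert]
    exact ⟨⟨hsB, hs⟩, fun s' hs' => ⟨(hsub s' hs').1.trans Finset.sdiff_subset, (hsub s' hs').2⟩⟩
  · simp only [Finset.mem_insert]
    rintro u (rfl | hu) v (rfl | hv) huv
    · exact absurd rfl huv
    · exact hsT v hv
    · exact (hsT u hu).symm
    · exact hdisj u hu v hv huv
  · simp only [Finset.forall_mem_insert]
    exact ⟨hsR, hfree⟩

/-- Given `b` blue points and `b - 3t` red points in general position, there are `t`
vertex-disjoint triangles with blue vertices containing no red point. -/
theorem stmt0 (B R : Finset Pt) (t : ℕ)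
    (hdisj : Disjoint B R) (hgp : GenPos (B ∪ R))
    (hcard : R.card + 3 * t = B.card) :
    ∃ T : Finset (Finset Pt), T.card = t ∧
      (∀ s ∈ T, s ⊆ B ∧ s.card = 3) ∧
      (∀ s ∈ T, ∀ s' ∈ T, s ≠ s' → Disjoint s s') ∧
      (∀ s ∈ T, ∀ r ∈ R, r ∉ convexHull ℝ (↑s : Set Pt)) := by
  induction t generalizing B with
  | zero => exact ⟨∅, rfl, by simp⟩
  | succ t ih =>
    obtain ⟨s, hsB, hs, hsR⟩ := exists_triangle_forall_notMem_convexHull hdisj hgp (by omega)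
    obtain ⟨T, hTcard, hT⟩ := ih (B \ s) (hdisj.mono_left Finset.sdiff_subset)
      (hgp.mono (Finset.union_subset_union_left Finset.sdiff_subset))
      (by rw [Finset.card_sdiff_of_subset hsB]; omega)
    obtain ⟨hsT, hT'⟩ := IsRedFreePacking.insert hT hsB hs hsR
    exact ⟨insert s T, by rw [Finset.card_insert_of_notMem hsT, hTcard], hT'⟩
end

section
/- Suppose every set of 15 bichromatic points in general position in the plane contains two vertex-disjoint monochromatic empty triangles. Then every bichromatic planar point set of n points in general position can be covered by at most (13/30)n + 15/2 monochromatic triangles (triangles containing only points of one color). -/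
lemma hull_coords {s : Finset Pt} {p : Pt} (hp : p ∈ convexHull ℝ (↑s : Set Pt)) :
    ∃ w : Pt → ℝ, (∀ y ∈ s, 0 ≤ w y) ∧ (∑ y ∈ s, w y = 1) ∧
      (∑ v ∈ s, w v * v.1) = p.1 ∧ (∑ v ∈ s, w v * v.2) = p.2 := by
  rw [Finset.convexHull_eq] at hp
  obtain ⟨w, hw0, hw1, hwc⟩ := hp
  rw [Finset.centerMass_eq_of_sum_1 _ _ hw1] at hwc
  refine ⟨w, hw0, hw1, ?_, ?_⟩
  · rw [← hwc, Prod.fst_sum]; simp [Prod.smul_fst, smul_eq_mul]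
  · rw [← hwc, Prod.snd_sum]; simp [Prod.smul_snd, smul_eq_mul]

lemma notMem_hull_core {s : Finset Pt} {w : Pt → ℝ} {f g : Pt → ℝ}
    (hw0 : ∀ y ∈ s, 0 ≤ w y) (hw1 : ∑ y ∈ s, w y = 1)
    (hf : ∑ v ∈ s, w v * f v = 0) (hg : ∑ v ∈ s, w v * g v = 0)
    (h : ∀ v ∈ s, (0 < f v) ∨ (f v = 0 ∧ 0 < g v)) : False := by
  have hz1 : ∀ v ∈ s, w v = 0 ∨ f v = 0 := by
    rw [Finset.sum_eq_zero_iff_of_nonneg (by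
      intro v hv
      rcases h v hv with h' | ⟨h', _⟩
      · exact mul_nonneg (hw0 v hv) h'.le
      · rw [h']; simp)] at hf
    intro v hv
    exact mul_eq_zero.1 (hf v hv)
  have hz2 : ∀ v ∈ s, w v = 0 := by
    have hnn : ∀ v ∈ s, 0 ≤ w v * g v := by
      intro v hv
      rcases hz1 v hv with h0 | h0
      · rw [h0]; simp
      · rcases h v hv with h' | ⟨_, h2⟩
        · exact absurd h' (by linarith)
        · exact mul_nonneg (hw0 v hv) h2.le
    rw [Finset.sum_eq_zero_iff_of_nonneg hnn] at hg
    intro v hv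
    rcases mul_eq_zero.1 (hg v hv) with h0 | h0
    · exact h0
    · rcases hz1 v hv with h1 | h1
      · exact h1
      · rcases h v hv with h' | ⟨_, h2⟩
        · exact absurd h' (by linarith)
        · exact absurd h0 (by linarith)
  rw [Finset.sum_eq_zero hz2] at hw1
  norm_num at hw1

/-- A point lexicographically greater than all members of `s` is not in the hull of `s`. -/
lemma notMem_hull_of_lex_lt {s : Finset Pt} {p : Pt}
    (h : ∀ v ∈ s, v.1 < p.1 ∨ (v.1 = p.1 ∧ v.2 < p.2)) :
    p ∉ convexHull ℝ (↑s : Set Pt) := by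
  intro hp
  obtain ⟨w, hw0, hw1, hx, hy⟩ := hull_coords hp
  refine notMem_hull_core (f := fun v => p.1 - v.1) (g := fun v => p.2 - v.2)
    hw0 hw1 ?_ ?_ ?_
  · simp only [mul_sub, Finset.sum_sub_distrib, ← Finset.sum_mul, hw1, hx]; ring
  · simp only [mul_sub, Finset.sum_sub_distrib, ← Finset.sum_mul, hw1, hy]; ring
  · intro v hv; rcases h v hv with h' | ⟨h1, h2⟩
    · exact Or.inl (by simpa using sub_pos.2 h')
    · exact Or.inr ⟨by simp [h1], by simpa using sub_pos.2 h2⟩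

/-- A point lexicographically smaller than all members of `s` is not in the hull of `s`. -/
lemma notMem_hull_of_lex_gt {s : Finset Pt} {p : Pt}
    (h : ∀ v ∈ s, p.1 < v.1 ∨ (v.1 = p.1 ∧ p.2 < v.2)) :
    p ∉ convexHull ℝ (↑s : Set Pt) := by
  intro hp
  obtain ⟨w, hw0, hw1, hx, hy⟩ := hull_coords hp
  refine notMem_hull_core (f := fun v => v.1 - p.1) (g := fun v => v.2 - p.2)
    hw0 hw1 ?_ ?_ ?_
  · simp only [mul_sub, Finset.sum_sub_distrib, ← Finset.sum_mul, hw1, hx]; ring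
  · simp only [mul_sub, Finset.sum_sub_distrib, ← Finset.sum_mul, hw1, hy]; ring
  · intro v hv; rcases h v hv with h' | ⟨h1, h2⟩
    · exact Or.inl (by simpa using sub_pos.2 h')
    · exact Or.inr ⟨by simp [h1], by simpa using sub_pos.2 h2⟩


lemma exists_initial_subset {α β : Type*} [DecidableEq α] [LinearOrder β] (k : α → β)
    (hk : Function.Injective k) (P : Finset α) :
    ∀ m, m ≤ P.card → ∃ Q, Q ⊆ P ∧ Q.card = m ∧ ∀ a ∈ Q, ∀ b ∈ P \ Q, k a < k b := by
  intro m
  induction m with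
  | zero => exact fun _ => ⟨∅, Finset.empty_subset _, rfl, by simp⟩
  | succ m ih =>
    intro hm
    obtain ⟨Q, hQP, hQc, hQlt⟩ := ih (by omega)
    have hne : (P \ Q).Nonempty := by
      rw [← Finset.card_pos, Finset.card_sdiff_of_subset hQP]; omega
    obtain ⟨b0, hb0, hb0min⟩ := Finset.exists_min_image (P \ Q) k hne
    have hb0' := Finset.mem_sdiff.1 hb0
    refine ⟨insert b0 Q, Finset.insert_subset hb0'.1 hQP, ?_, ?_⟩
    · rw [Finset.card_insert_of_notMem hb0'.2, hQc]
    · intro a ha b hb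
      have hbP : b ∈ P \ Q := by
        rw [Finset.mem_sdiff] at hb ⊢
        exact ⟨hb.1, fun h => hb.2 (Finset.mem_insert_of_mem h)⟩
      rcases Finset.mem_insert.1 ha with rfl | ha
      · have hle : k a ≤ k b := hb0min b hbP
        have hne' : a ≠ b := by
          rintro rfl; exact (Finset.mem_sdiff.1 hb).2 (Finset.mem_insert_self _ _)
        exact lt_of_le_of_ne hle (fun h => hne' (hk h))
      · exact hQlt a ha b hbP

lemma pairing : ∀ n (A : Finset Pt), A.card = n →
    ∃ U : Finset (Finset Pt),
      (∀ s ∈ U, s.Nonempty ∧ s.card ≤ 2 ∧ s ⊆ A) ∧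
      (∀ p ∈ A, ∃ s ∈ U, p ∈ s) ∧ (U.card : ℚ) ≤ (A.card : ℚ) / 2 + 1 / 2 := by
  intro n
  induction n using Nat.strong_induction_on with
  | _ n ih =>
    intro A hA
    match n, hA with
    | 0, hA =>
      refine ⟨∅, by simp, ?_, by simp; positivity⟩
      intro p hp
      rw [Finset.card_eq_zero.1 hA] at hp; simp at hp
    | 1, hA =>
      obtain ⟨a, ha⟩ := Finset.card_eq_one.1 hA
      refine ⟨{A}, ?_, ?_, ?_⟩
      · intro s hs; rw [Finset.mem_singleton] at hs
        subst hs; exact ⟨by rw [ha]; simp, by rw [hA]; norm_num, subset_rfl⟩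
      · intro p hp; exact ⟨A, Finset.mem_singleton_self _, hp⟩
      · rw [Finset.card_singleton, hA]; norm_num
    | (m+2), hA =>
      have h1 : A.Nonempty := by rw [← Finset.card_pos]; omega
      obtain ⟨a, haA⟩ := h1
      have h2 : (A.erase a).Nonempty := by
        rw [← Finset.card_pos, Finset.card_erase_of_mem haA]; omega
      obtain ⟨b, hbA⟩ := h2
      have hab : a ≠ b := (Finset.ne_of_mem_erase hbA).symm
      have hbA' : b ∈ A := Finset.mem_of_mem_erase hbA
      set A' := A \ {a, b} with hA'
      have hsub : ({a, b} : Finset Pt) ⊆ A := by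
        intro x hx; rcases Finset.mem_insert.1 hx with rfl | hx
        · exact haA
        · rw [Finset.mem_singleton.1 hx]; exact hbA'
      have hcard' : A'.card = m := by
        rw [hA', Finset.card_sdiff_of_subset hsub, hA, Finset.card_insert_of_notMem (by simp [hab]),
          Finset.card_singleton]
        omega
      obtain ⟨U', hU'1, hU'2, hU'3⟩ := ih m (by omega) A' hcard'
      refine ⟨insert {a, b} U', ?_, ?_, ?_⟩
      · intro s hs
        rcases Finset.mem_insert.1 hs with rfl | hs
        · exact ⟨⟨a, Finset.mem_insert_self _ _⟩, Finset.card_insert_le _ _ |>.trans (by simp), hsub⟩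
        · obtain ⟨h1, h2, h3⟩ := hU'1 s hs
          exact ⟨h1, h2, h3.trans (Finset.sdiff_subset)⟩
      · intro p hp
        by_cases hpab : p ∈ ({a, b} : Finset Pt)
        · exact ⟨{a, b}, Finset.mem_insert_self _ _, hpab⟩
        · obtain ⟨s, hs, hps⟩ := hU'2 p (Finset.mem_sdiff.2 ⟨hp, hpab⟩)
          exact ⟨s, Finset.mem_insert_of_mem hs, hps⟩
      · have h3 : ((insert ({a,b} : Finset Pt) U').card : ℚ) ≤ U'.card + 1 := by
          exact_mod_cast Finset.card_insert_le _ _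
        rw [hcard'] at hU'3
        have : ((m : ℚ) + 2) = ((m+2 : ℕ) : ℚ) := by push_cast; ring
        rw [hA]
        push_cast
        linarith


lemma genpos_mono {P Q : Finset Pt} (h : Q ⊆ P) (hP : GenPos P) : GenPos Q :=
  fun p hp q hq r hr => hP p (h hp) q (h hq) r (h hr)

lemma aux13
    (H : ∀ B R : Finset Pt, Disjoint B R → GenPos (B ∪ R) → (B ∪ R).card = 15 →
      ∃ s1 s2 : Finset Pt,
        (s1 ⊆ B ∨ s1 ⊆ R) ∧ (s2 ⊆ B ∨ s2 ⊆ R) ∧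
        s1.card = 3 ∧ s2.card = 3 ∧ Disjoint s1 s2 ∧
        ¬ Collinear ℝ (↑s1 : Set Pt) ∧ ¬ Collinear ℝ (↑s2 : Set Pt) ∧
        (∀ x ∈ (B ∪ R) \ s1, x ∉ convexHull ℝ (↑s1 : Set Pt)) ∧
        (∀ x ∈ (B ∪ R) \ s2, x ∉ convexHull ℝ (↑s2 : Set Pt))) :
    ∀ n (B R : Finset Pt), (B ∪ R).card = n → Disjoint B R → GenPos (B ∪ R) →
    ∃ (T : Finset (Finset Pt)) (lB lR : Finset Pt),
      lB ⊆ B ∧ lR ⊆ R ∧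
      (∀ s ∈ T, s.card = 3 ∧ (s ⊆ B ∨ s ⊆ R) ∧
        ∀ x ∈ (B ∪ R) \ s, x ∉ convexHull ℝ (↑s : Set Pt)) ∧
      (∀ p ∈ B ∪ R, p ∈ lB ∪ lR ∨ ∃ s ∈ T, p ∈ s) ∧
      ((T.card : ℚ) + ((lB.card : ℚ) + (lR.card : ℚ)) / 2 ≤ 13/30 * n + 13/2) := by
  intro n
  induction n using Nat.strong_induction_on with
  | _ n ih =>
    intro B R hcard hdisj hgp
    by_cases hn : n < 15
    · -- base case
      refine ⟨∅, B, R, subset_rfl, subset_rfl, by simp, fun p hp => Or.inl hp, ?_⟩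
      have hBR : B.card + R.card = n := by
        rw [← Finset.card_union_of_disjoint hdisj, hcard]
      have h14 : (n : ℚ) ≤ 14 := by exact_mod_cast Nat.lt_succ_iff.1 hn
      have : ((B.card : ℚ) + R.card) = n := by exact_mod_cast hBR
      simp only [Finset.card_empty, Nat.cast_zero, zero_add]
      linarith
    · push_neg at hn
      -- peel off the 15 lexicographically smallest points
      obtain ⟨Q, hQsub, hQcard, hQlt⟩ :=
        exists_initial_subset (fun p : Pt => toLex p) toLex.injective (B ∪ R) 15
          (by omega)
      set BQ := B ∩ Q with hBQ
      set RQ := R ∩ Q with hRQ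
      have hBRQ : BQ ∪ RQ = Q := by
        rw [hBQ, hRQ, ← Finset.union_inter_distrib_right]
        exact Finset.inter_eq_right.2 hQsub
      have hdisjQ : Disjoint BQ RQ :=
        hdisj.mono Finset.inter_subset_left Finset.inter_subset_left
      have hgpQ : GenPos (BQ ∪ RQ) := by
        rw [hBRQ]; exact genpos_mono hQsub hgp
      obtain ⟨s1, s2, hs1sub, hs2sub, hc1, hc2, hd12, -, -, hE1, hE2⟩ :=
        H BQ RQ hdisjQ hgpQ (by rw [hBRQ, hQcard])
      rw [hBRQ] at hE1 hE2
      have hs1Q : s1 ⊆ Q := by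
        rcases hs1sub with h | h
        · exact h.trans Finset.inter_subset_right
        · exact h.trans Finset.inter_subset_right
      have hs2Q : s2 ⊆ Q := by
        rcases hs2sub with h | h
        · exact h.trans Finset.inter_subset_right
        · exact h.trans Finset.inter_subset_right
      -- recurse on the rest
      set B' := B \ Q with hB'
      set R' := R \ Q with hR'
      have hB'R' : B' ∪ R' = (B ∪ R) \ Q := by
        rw [hB', hR', Finset.union_sdiff_distrib]
      have hcard' : (B' ∪ R').card = n - 15 := by
        rw [hB'R', Finset.card_sdiff_of_subset hQsub, hcard, hQcard]
      obtain ⟨T', lB', lR', hlB', hlR', hT', hcov', hbound'⟩ :=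
        ih (n - 15) (by omega) B' R' hcard'
          (hdisj.mono Finset.sdiff_subset Finset.sdiff_subset)
          (by rw [hB'R']; exact genpos_mono Finset.sdiff_subset hgp)
      -- combine
      refine ⟨insert s1 (insert s2 T'), lB' ∪ (BQ \ (s1 ∪ s2)), lR' ∪ (RQ \ (s1 ∪ s2)),
        ?_, ?_, ?_, ?_, ?_⟩
      · exact Finset.union_subset (hlB'.trans Finset.sdiff_subset)
          (Finset.sdiff_subset.trans Finset.inter_subset_left)
      · exact Finset.union_subset (hlR'.trans Finset.sdiff_subset)
          (Finset.sdiff_subset.trans Finset.inter_subset_left)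
      · -- triangle properties
        intro s hs
        rcases Finset.mem_insert.1 hs with rfl | hs
        · -- s = s1
          refine ⟨hc1, ?_, ?_⟩
          · rcases hs1sub with h | h
            · exact Or.inl (h.trans Finset.inter_subset_left)
            · exact Or.inr (h.trans Finset.inter_subset_left)
          · intro x hx
            rw [Finset.mem_sdiff] at hx
            by_cases hxQ : x ∈ Q
            · exact hE1 x (Finset.mem_sdiff.2 ⟨hxQ, hx.2⟩)
            · refine notMem_hull_of_lex_lt ?_
              intro v hv
              have := hQlt v (hs1Q hv) x (Finset.mem_sdiff.2 ⟨hx.1, hxQ⟩)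
              rw [Prod.Lex.lt_iff] at this
              exact this
        rcases Finset.mem_insert.1 hs with rfl | hs
        · -- s = s2
          refine ⟨hc2, ?_, ?_⟩
          · rcases hs2sub with h | h
            · exact Or.inl (h.trans Finset.inter_subset_left)
            · exact Or.inr (h.trans Finset.inter_subset_left)
          · intro x hx
            rw [Finset.mem_sdiff] at hx
            by_cases hxQ : x ∈ Q
            · exact hE2 x (Finset.mem_sdiff.2 ⟨hxQ, hx.2⟩)
            · refine notMem_hull_of_lex_lt ?_
              intro v hv
              have := hQlt v (hs2Q hv) x (Finset.mem_sdiff.2 ⟨hx.1, hxQ⟩)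
              rw [Prod.Lex.lt_iff] at this
              exact this
        · -- s ∈ T'
          obtain ⟨h3, hsub, hEmp⟩ := hT' s hs
          have hsBR' : s ⊆ (B ∪ R) \ Q := by
            rw [← hB'R']
            rcases hsub with h | h
            · exact h.trans Finset.subset_union_left
            · exact h.trans Finset.subset_union_right
          refine ⟨h3, ?_, ?_⟩
          · rcases hsub with h | h
            · exact Or.inl (h.trans Finset.sdiff_subset)
            · exact Or.inr (h.trans Finset.sdiff_subset)
          · intro x hx
            rw [Finset.mem_sdiff] at hx
            by_cases hxQ : x ∈ Q
            · refine notMem_hull_of_lex_gt ?_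
              intro v hv
              have := hQlt x hxQ v (hsBR' hv)
              rw [Prod.Lex.lt_iff] at this
              rcases this with h' | ⟨h1, h2⟩
              · exact Or.inl h'
              · exact Or.inr ⟨h1.symm, h2⟩
            · refine hEmp x ?_
              rw [Finset.mem_sdiff, hB'R']
              exact ⟨Finset.mem_sdiff.2 ⟨hx.1, hxQ⟩, hx.2⟩
      · -- coverage
        intro p hp
        by_cases hpQ : p ∈ Q
        · by_cases hp1 : p ∈ s1
          · exact Or.inr ⟨s1, Finset.mem_insert_self _ _, hp1⟩
          by_cases hp2 : p ∈ s2
          · exact Or.inr ⟨s2, Finset.mem_insert_of_mem (Finset.mem_insert_self _ _), hp2⟩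
          left
          have hp12 : p ∉ s1 ∪ s2 := by
            rw [Finset.mem_union]; tauto
          rcases Finset.mem_union.1 hp with hpB | hpR
          · exact Finset.mem_union_left _ (Finset.mem_union_right _
              (Finset.mem_sdiff.2 ⟨Finset.mem_inter.2 ⟨hpB, hpQ⟩, hp12⟩))
          · exact Finset.mem_union_right _ (Finset.mem_union_right _
              (Finset.mem_sdiff.2 ⟨Finset.mem_inter.2 ⟨hpR, hpQ⟩, hp12⟩))
        · have hp' : p ∈ B' ∪ R' := by
            rw [hB'R', Finset.mem_sdiff]; exact ⟨hp, hpQ⟩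
          rcases hcov' p hp' with h | ⟨s, hsT, hps⟩
          · left
            rcases Finset.mem_union.1 h with h | h
            · exact Finset.mem_union_left _ (Finset.mem_union_left _ h)
            · exact Finset.mem_union_right _ (Finset.mem_union_left _ h)
          · exact Or.inr ⟨s, Finset.mem_insert_of_mem (Finset.mem_insert_of_mem hsT), hps⟩
      · -- counting
        have hTcard : (insert s1 (insert s2 T')).card ≤ T'.card + 2 := by
          calc (insert s1 (insert s2 T')).card ≤ (insert s2 T').card + 1 :=
                Finset.card_insert_le _ _
            _ ≤ T'.card + 2 := by
                have := Finset.card_insert_le s2 T'; omega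
        have hs12Q : s1 ∪ s2 ⊆ Q := Finset.union_subset hs1Q hs2Q
        have hc12 : (s1 ∪ s2).card = 6 := by
          rw [Finset.card_union_of_disjoint hd12, hc1, hc2]
        have hQ9 : (Q \ (s1 ∪ s2)).card = 9 := by
          rw [Finset.card_sdiff_of_subset hs12Q, hQcard, hc12]
        have hdisj9 : Disjoint (BQ \ (s1 ∪ s2)) (RQ \ (s1 ∪ s2)) :=
          (hdisjQ.mono Finset.sdiff_subset Finset.sdiff_subset)
        have hsum9 : (BQ \ (s1 ∪ s2)).card + (RQ \ (s1 ∪ s2)).card = 9 := by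
          rw [← Finset.card_union_of_disjoint hdisj9, ← Finset.union_sdiff_distrib, hBRQ, hQ9]
        have hlBcard : (lB' ∪ (BQ \ (s1 ∪ s2))).card ≤ lB'.card + (BQ \ (s1 ∪ s2)).card :=
          Finset.card_union_le _ _
        have hlRcard : (lR' ∪ (RQ \ (s1 ∪ s2))).card ≤ lR'.card + (RQ \ (s1 ∪ s2)).card :=
          Finset.card_union_le _ _
        have hn15 : ((n - 15 : ℕ) : ℚ) = (n : ℚ) - 15 := by
          push_cast [Nat.cast_sub hn]; ring
        rw [hn15] at hbound'
        have e1 : ((insert s1 (insert s2 T')).card : ℚ) ≤ (T'.card : ℚ) + 2 := by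
          exact_mod_cast hTcard
        have e2 : ((lB' ∪ (BQ \ (s1 ∪ s2))).card : ℚ) ≤ (lB'.card : ℚ) + (BQ \ (s1 ∪ s2)).card := by
          exact_mod_cast hlBcard
        have e3 : ((lR' ∪ (RQ \ (s1 ∪ s2))).card : ℚ) ≤ (lR'.card : ℚ) + (RQ \ (s1 ∪ s2)).card := by
          exact_mod_cast hlRcard
        have e4 : ((BQ \ (s1 ∪ s2)).card : ℚ) + ((RQ \ (s1 ∪ s2)).card : ℚ) = 9 := by
          exact_mod_cast hsum9
        linarith

/-- If every bichromatic set of 15 points in general position contains two vertex-disjoint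
monochromatic empty triangles, then every bichromatic planar `n`-point set in general position
can be covered by at most `(13/30)n + 15/2` monochromatic triangles. -/
theorem stmt13
    (H : ∀ B R : Finset Pt, Disjoint B R → GenPos (B ∪ R) → (B ∪ R).card = 15 →
      ∃ s1 s2 : Finset Pt,
        (s1 ⊆ B ∨ s1 ⊆ R) ∧ (s2 ⊆ B ∨ s2 ⊆ R) ∧
        s1.card = 3 ∧ s2.card = 3 ∧ Disjoint s1 s2 ∧
        ¬ Collinear ℝ (↑s1 : Set Pt) ∧ ¬ Collinear ℝ (↑s2 : Set Pt) ∧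
        (∀ x ∈ (B ∪ R) \ s1, x ∉ convexHull ℝ (↑s1 : Set Pt)) ∧
        (∀ x ∈ (B ∪ R) \ s2, x ∉ convexHull ℝ (↑s2 : Set Pt))) :
    ∀ B R : Finset Pt, Disjoint B R → GenPos (B ∪ R) →
      ∃ T : Finset (Finset Pt),
        (T.card : ℚ) ≤ 13 / 30 * (B ∪ R).card + 15 / 2 ∧
        (∀ s ∈ T, s.Nonempty ∧ s.card ≤ 3) ∧
        (∀ p ∈ B ∪ R, ∃ s ∈ T, p ∈ convexHull ℝ (↑s : Set Pt)) ∧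
        (∀ s ∈ T, ¬ ((∃ p ∈ B, p ∈ convexHull ℝ (↑s : Set Pt)) ∧
                     (∃ r ∈ R, r ∈ convexHull ℝ (↑s : Set Pt)))) := by
  intro B R hdisj hgp
  obtain ⟨T, lB, lR, hlB, hlR, hT, hcov, hbound⟩ :=
    aux13 H (B ∪ R).card B R rfl hdisj hgp
  obtain ⟨UB, hUB1, hUB2, hUB3⟩ := pairing lB.card lB rfl
  obtain ⟨UR, hUR1, hUR2, hUR3⟩ := pairing lR.card lR rfl
  have segment_mono : ∀ (U : Finset (Finset Pt)) (lA A other : Finset Pt),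
      (∀ s ∈ U, s.Nonempty ∧ s.card ≤ 2 ∧ s ⊆ lA) → lA ⊆ A → Disjoint other A →
      other ⊆ B ∪ R → A ⊆ B ∪ R →
      ∀ s ∈ U, ∀ r ∈ other, r ∉ convexHull ℝ (↑s : Set Pt) := by
    intro U lA A other hU hlA hdo hoBR hABR s hs r hr hrhull
    obtain ⟨hne, hle2, hsub⟩ := hU s hs
    have hsA : s ⊆ A := hsub.trans hlA
    interval_cases h : s.card
    · exact absurd (Finset.card_eq_zero.1 h ▸ hne) (by simp)
    · obtain ⟨a, ha⟩ := Finset.card_eq_one.1 h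
      rw [ha] at hrhull
      simp only [Finset.coe_singleton, convexHull_singleton, Set.mem_singleton_iff] at hrhull
      have haA : a ∈ A := hsA (by rw [ha]; exact Finset.mem_singleton_self a)
      exact Finset.disjoint_left.1 hdo hr (hrhull ▸ haA)
    · obtain ⟨a, b, hab, hab'⟩ := Finset.card_eq_two.1 h
      have haA : a ∈ A := hsA (hab' ▸ by simp)
      have hbA : b ∈ A := hsA (hab' ▸ by simp)
      rw [hab'] at hrhull
      simp only [Finset.coe_insert, Finset.coe_singleton] at hrhull
      have hr_span : r ∈ affineSpan ℝ ({a, b} : Set Pt) :=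
        convexHull_subset_affineSpan _ hrhull
      have hcol : Collinear ℝ ({r, a, b} : Set Pt) :=
        collinear_insert_of_mem_affineSpan_pair hr_span
      have hra : r ≠ a := fun hra => Finset.disjoint_left.1 hdo hr (hra ▸ haA)
      have hrb : r ≠ b := fun hrb => Finset.disjoint_left.1 hdo hr (hrb ▸ hbA)
      exact hgp r (hoBR hr) a (hABR haA) b (hABR hbA) hra hrb hab hcol
  refine ⟨T ∪ UB ∪ UR, ?_, ?_, ?_, ?_⟩
  · -- cardinality
    have h1 : (T ∪ UB ∪ UR).card ≤ T.card + UB.card + UR.card := by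
      calc (T ∪ UB ∪ UR).card ≤ (T ∪ UB).card + UR.card := Finset.card_union_le _ _
        _ ≤ T.card + UB.card + UR.card := by
            have := Finset.card_union_le T UB; omega
    have h1' : ((T ∪ UB ∪ UR).card : ℚ) ≤ (T.card : ℚ) + UB.card + UR.card := by
      exact_mod_cast h1
    linarith
  · -- sizes
    intro s hs
    rcases Finset.mem_union.1 hs with hs | hs
    rcases Finset.mem_union.1 hs with hs | hs
    · obtain ⟨h3, -, -⟩ := hT s hs
      exact ⟨Finset.card_pos.1 (by omega), by omega⟩
    · obtain ⟨h1, h2, -⟩ := hUB1 s hs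
      exact ⟨h1, by omega⟩
    · obtain ⟨h1, h2, -⟩ := hUR1 s hs
      exact ⟨h1, by omega⟩
  · -- coverage
    intro p hp
    rcases hcov p hp with h | ⟨s, hsT, hps⟩
    · rcases Finset.mem_union.1 h with h | h
      · obtain ⟨s, hs, hps⟩ := hUB2 p h
        exact ⟨s, Finset.mem_union_left _ (Finset.mem_union_right _ hs),
          subset_convexHull ℝ _ (Finset.mem_coe.2 hps)⟩
      · obtain ⟨s, hs, hps⟩ := hUR2 p h
        exact ⟨s, Finset.mem_union_right _ hs,
          subset_convexHull ℝ _ (Finset.mem_coe.2 hps)⟩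
    · exact ⟨s, Finset.mem_union_left _ (Finset.mem_union_left _ hsT),
        subset_convexHull ℝ _ (Finset.mem_coe.2 hps)⟩
  · -- monochromaticity
    rintro s hs ⟨⟨p, hpB, hphull⟩, ⟨r, hrR, hrhull⟩⟩
    rcases Finset.mem_union.1 hs with hs | hs
    rcases Finset.mem_union.1 hs with hs | hs
    · obtain ⟨-, hsub, hEmp⟩ := hT s hs
      rcases hsub with hsB | hsR
      · have hrs : r ∉ s := fun h => Finset.disjoint_left.1 hdisj (hsB h) hrR
        exact hEmp r (Finset.mem_sdiff.2 ⟨Finset.mem_union_right _ hrR, hrs⟩) hrhull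
      · have hps : p ∉ s := fun h => Finset.disjoint_left.1 hdisj hpB (hsR h)
        exact hEmp p (Finset.mem_sdiff.2 ⟨Finset.mem_union_left _ hpB, hps⟩) hphull
    · exact segment_mono UB lB B R hUB1 hlB hdisj.symm Finset.subset_union_right
        Finset.subset_union_left s hs r hrR hrhull
    · exact segment_mono UR lR R B hUR1 hlR hdisj Finset.subset_union_left
        Finset.subset_union_right s hs p hpB hphull
end

section
/- Let T be a closed triangle in the plane and B a finite set of points in convex position, none of which lies in T. Then B can be partitioned into three sets B₁, B₂, B₃ such that each B_i is separated from T by one of the three lines supporting the sides of T, and each B_i consists of consecutive points along the convex hull of B (so the convex hulls of B₁, B₂, B₃ are pairwise disjoint and disjoint from T). -/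
/-- Signed area (orientation) determinant of three planar points. -/
def det3 (a b c : Pt) : ℝ := (b.1 - a.1) * (c.2 - a.2) - (b.2 - a.2) * (c.1 - a.1)

open Set

theorem exists_tripartition_convexHull_subset {𝕜 E : Type*} [Semiring 𝕜] [PartialOrder 𝕜]
    [AddCommMonoid E] [Module 𝕜 E] [DecidableEq E] {S₁ S₂ S₃ : Set E}
    (h₁ : Convex 𝕜 S₁) (h₁' : Convex 𝕜 S₁ᶜ) (h₂ : Convex 𝕜 S₂) (h₂' : Convex 𝕜 S₂ᶜ)
    (h₃ : Convex 𝕜 S₃) (B : Finset E) (hB : ∀ p ∈ B, p ∈ S₁ ∪ S₂ ∪ S₃) :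
    ∃ B₁ B₂ B₃ : Finset E,
      B = B₁ ∪ B₂ ∪ B₃ ∧ Disjoint B₁ B₂ ∧ Disjoint B₁ B₃ ∧ Disjoint B₂ B₃ ∧
      convexHull 𝕜 ↑B₁ ⊆ S₁ ∧ convexHull 𝕜 ↑B₂ ⊆ S₂ ∧ convexHull 𝕜 ↑B₃ ⊆ S₃ ∧
      Disjoint (convexHull 𝕜 (↑B₁ : Set E)) (convexHull 𝕜 ↑B₂) ∧
      Disjoint (convexHull 𝕜 (↑B₁ : Set E)) (convexHull 𝕜 ↑B₃) ∧
      Disjoint (convexHull 𝕜 (↑B₂ : Set E)) (convexHull 𝕜 ↑B₃) := by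
  classical
  have hull : ∀ {C : Set E}, Convex 𝕜 C → ∀ P : E → Prop, [DecidablePred P] →
      (∀ p ∈ B, P p → p ∈ C) → convexHull 𝕜 ↑(B.filter P) ⊆ C := fun hC P _ hP =>
    convexHull_min (fun p hp => hP p (Finset.mem_filter.1 hp).1 (Finset.mem_filter.1 hp).2) hC
  have hull₁ := hull h₁ (· ∈ S₁) fun _ _ h => h
  have hull₂ := hull (h₁'.inter h₂) (· ∈ S₁ᶜ ∩ S₂) fun _ _ h => h
  have hull₃ := hull (h₁'.inter h₂' |>.inter h₃) (· ∈ S₁ᶜ ∩ S₂ᶜ) fun p hp h => by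
    have := hB p hp; simp_all
  refine ⟨B.filter (· ∈ S₁), B.filter (· ∈ S₁ᶜ ∩ S₂), B.filter (· ∈ S₁ᶜ ∩ S₂ᶜ), ?_,
    Finset.disjoint_filter.2 fun _ _ h h' => h'.1 h,
    Finset.disjoint_filter.2 fun _ _ h h' => h'.1 h,
    Finset.disjoint_filter.2 fun _ _ h h' => h'.2 h.2, hull₁, hull₂.trans inter_subset_right,
    hull₃.trans inter_subset_right, ?_, ?_, ?_⟩
  · ext p
    simp only [Finset.mem_union, Finset.mem_filter, mem_inter_iff, mem_compl_iff]
    tauto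
  · exact disjoint_compl_right.mono hull₁ (hull₂.trans inter_subset_left)
  · exact disjoint_compl_right.mono hull₁ (hull₃.trans (inter_subset_left.trans inter_subset_left))
  · exact disjoint_compl_right.mono (hull₂.trans inter_subset_right)
      (hull₃.trans (inter_subset_left.trans inter_subset_right))

lemma det3_rotate (a b c : Pt) : det3 b c a = det3 a b c := by unfold det3; ring

lemma collinear_of_det3_eq_zero {a b c : Pt} (h : det3 a b c = 0) :
    Collinear ℝ ({a, b, c} : Set Pt) := by
  rcases eq_or_ne a b with rfl | hab
  · simpa using collinear_pair ℝ a c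
  have hn : (b.1 - a.1) ^ 2 + (b.2 - a.2) ^ 2 ≠ 0 := by
    intro h0
    exact hab (Prod.ext (by nlinarith) (by nlinarith))
  -- `c - a` is parallel to `b - a`, so it equals its orthogonal projection onto `b - a`
  have hc : c = AffineMap.lineMap a b
      (((b.1 - a.1) * (c.1 - a.1) + (b.2 - a.2) * (c.2 - a.2)) /
        ((b.1 - a.1) ^ 2 + (b.2 - a.2) ^ 2)) := by
    unfold det3 at h
    ext <;> simp only [AffineMap.lineMap_apply_module', Prod.fst_add, Prod.snd_add,
      Prod.smul_fst, Prod.smul_snd, Prod.fst_sub, Prod.snd_sub, smul_eq_mul] <;> field_simp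
    · linear_combination -(b.2 - a.2) * h
    · linear_combination (b.1 - a.1) * h
  exact collinear_triple_of_mem_affineSpan_pair (left_mem_affineSpan_pair ℝ a b)
    (right_mem_affineSpan_pair ℝ a b) (hc ▸ AffineMap.lineMap_mem_affineSpan_pair _ _ _)

lemma det3_ne_zero_of_not_collinear {a b c : Pt} (h : ¬ Collinear ℝ ({a, b, c} : Set Pt)) :
    det3 a b c ≠ 0 :=
  mt collinear_of_det3_eq_zero h

def sideMap (u v w : Pt) : Pt →ᵃ[ℝ] ℝ where
  toFun x := det3 u v x * det3 u v w
  linear := det3 u v w • ((v.1 - u.1) • LinearMap.snd ℝ ℝ ℝ - (v.2 - u.2) • LinearMap.fst ℝ ℝ ℝ)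
  map_vadd' p x := by simp [det3]; ring

/-- The open half-plane bounded by the line `uv` and not containing `w` (empty when `u, v, w` are
collinear). -/
def sOppSide (u v w : Pt) : Set Pt := {x | det3 u v x * det3 u v w < 0}

lemma convex_sOppSide (u v w : Pt) : Convex ℝ (sOppSide u v w) :=
  (convex_Iio 0).affine_preimage (sideMap u v w)

lemma convex_compl_sOppSide (u v w : Pt) : Convex ℝ (sOppSide u v w)ᶜ := by
  have := (convex_Ici (0 : ℝ)).affine_preimage (sideMap u v w)
  rwa [← compl_Iio, preimage_compl] at this

lemma left_notMem_sOppSide (u v w : Pt) : u ∉ sOppSide u v w := by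
  have : det3 u v u = 0 := by unfold det3; ring
  simp [sOppSide, this]

lemma right_notMem_sOppSide (u v w : Pt) : v ∉ sOppSide u v w := by
  have : det3 u v v = 0 := by unfold det3; ring
  simp [sOppSide, this]

lemma notMem_sOppSide_self (u v w : Pt) : w ∉ sOppSide u v w :=
  (mul_self_nonneg (det3 u v w)).not_gt

lemma mem_convexHull_triple_of_forall_notMem_sOppSide {a b c p : Pt} (hD : det3 a b c ≠ 0)
    (h₁ : p ∉ sOppSide b c a) (h₂ : p ∉ sOppSide c a b) (h₃ : p ∉ sOppSide a b c) :
    p ∈ convexHull ℝ ({a, b, c} : Set Pt) := by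
  set D := det3 a b c
  have hbc : det3 b c a = D := det3_rotate a b c
  have hca : det3 c a b = D := (det3_rotate b c a).trans hbc
  have hab : det3 a b c = D := rfl
  simp only [sOppSide, mem_ofPred_eq, not_lt, hab, hbc, hca] at h₁ h₂ h₃
  -- barycentric coordinates of `p`, scaled by `D ^ 2` to make them nonnegative
  let w : Fin 3 → ℝ := ![det3 b c p * D, det3 c a p * D, det3 a b p * D]
  have hw : ∑ i, w i = D ^ 2 := by
    simp only [w, D, Fin.sum_univ_three, Matrix.cons_val, det3]; ring
  have hwz : ∑ i, w i • ![a, b, c] i = D ^ 2 • p := by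
    simp only [w, D, Fin.sum_univ_three, Matrix.cons_val]
    ext <;> simp only [Prod.fst_add, Prod.snd_add, Prod.smul_fst, Prod.smul_snd, smul_eq_mul,
      det3] <;> ring
  have hmem := Finset.centerMass_mem_convexHull Finset.univ (w := w) (z := ![a, b, c])
    (s := {a, b, c}) (by simp [w, Fin.forall_fin_succ, h₁, h₂, h₃]) (hw ▸ by positivity)
    (by simp [Fin.forall_fin_succ])
  rwa [Finset.centerMass, hw, hwz, smul_smul, inv_mul_cancel₀ (pow_ne_zero 2 hD), one_smul] at hmem

theorem convexHull_triple_eq_compl_sOppSide {a b c : Pt} (hD : det3 a b c ≠ 0) :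
    convexHull ℝ ({a, b, c} : Set Pt) = (sOppSide b c a ∪ sOppSide c a b ∪ sOppSide a b c)ᶜ := by
  refine (convexHull_min ?_ ?_).antisymm fun p hp => ?_
  · simp only [insert_subset_iff, singleton_subset_iff, compl_union, mem_inter_iff, mem_compl_iff]
    exact ⟨⟨⟨notMem_sOppSide_self _ _ _, right_notMem_sOppSide _ _ _⟩, left_notMem_sOppSide _ _ _⟩,
      ⟨⟨left_notMem_sOppSide _ _ _, notMem_sOppSide_self _ _ _⟩, right_notMem_sOppSide _ _ _⟩,
      ⟨⟨right_notMem_sOppSide _ _ _, left_notMem_sOppSide _ _ _⟩, notMem_sOppSide_self _ _ _⟩⟩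
  · rw [compl_union, compl_union]
    exact ((convex_compl_sOppSide _ _ _).inter (convex_compl_sOppSide _ _ _)).inter
      (convex_compl_sOppSide _ _ _)
  · simp only [compl_union, mem_inter_iff, mem_compl_iff] at hp
    exact mem_convexHull_triple_of_forall_notMem_sOppSide hD hp.1.1 hp.1.2 hp.2

theorem stmt16_general (a b c : Pt) (habc : ¬ Collinear ℝ ({a, b, c} : Set Pt))
    (B : Finset Pt)
    (hout : ∀ p ∈ B, p ∉ convexHull ℝ ({a, b, c} : Set Pt)) :
    ∃ B1 B2 B3 : Finset Pt,
      B = B1 ∪ B2 ∪ B3 ∧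
      Disjoint B1 B2 ∧ Disjoint B1 B3 ∧ Disjoint B2 B3 ∧
      (∀ p ∈ B1, det3 b c p * det3 b c a < 0) ∧
      (∀ p ∈ B2, det3 c a p * det3 c a b < 0) ∧
      (∀ p ∈ B3, det3 a b p * det3 a b c < 0) ∧
      Disjoint (convexHull ℝ (↑B1 : Set Pt)) (convexHull ℝ (↑B2 : Set Pt)) ∧
      Disjoint (convexHull ℝ (↑B1 : Set Pt)) (convexHull ℝ (↑B3 : Set Pt)) ∧
      Disjoint (convexHull ℝ (↑B2 : Set Pt)) (convexHull ℝ (↑B3 : Set Pt)) ∧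
      Disjoint (convexHull ℝ (↑B1 : Set Pt)) (convexHull ℝ ({a, b, c} : Set Pt)) ∧
      Disjoint (convexHull ℝ (↑B2 : Set Pt)) (convexHull ℝ ({a, b, c} : Set Pt)) ∧
      Disjoint (convexHull ℝ (↑B3 : Set Pt)) (convexHull ℝ ({a, b, c} : Set Pt)) := by
  have hT := convexHull_triple_eq_compl_sOppSide (det3_ne_zero_of_not_collinear habc)
  obtain ⟨B1, B2, B3, hB, h12, h13, h23, hull1, hull2, hull3, d12, d13, d23⟩ :=
    exists_tripartition_convexHull_subset (convex_sOppSide b c a) (convex_compl_sOppSide b c a)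
      (convex_sOppSide c a b) (convex_compl_sOppSide c a b) (convex_sOppSide a b c) B
      fun p hp => of_not_not (by simpa only [hT, mem_compl_iff] using hout p hp)
  have hT_disjoint {s : Set Pt} (hs : s ⊆ sOppSide b c a ∪ sOppSide c a b ∪ sOppSide a b c) :
      Disjoint s (convexHull ℝ {a, b, c}) :=
    hT ▸ disjoint_compl_right.mono_left hs
  exact ⟨B1, B2, B3, hB, h12, h13, h23, fun p hp => hull1 (subset_convexHull ℝ _ hp),
    fun p hp => hull2 (subset_convexHull ℝ _ hp), fun p hp => hull3 (subset_convexHull ℝ _ hp),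
    d12, d13, d23, hT_disjoint (hull1.trans (subset_union_left.trans subset_union_left)),
    hT_disjoint (hull2.trans (subset_union_right.trans subset_union_left)),
    hT_disjoint (hull3.trans subset_union_right)⟩

/-- A finite set `B` in convex position, avoiding a triangle `T = conv{a,b,c}`, can be
partitioned into three parts, each separated from `T` by the line supporting one of the three
sides, with pairwise disjoint convex hulls that are also disjoint from `T`. -/
theorem stmt16 (a b c : Pt) (habc : ¬ Collinear ℝ ({a, b, c} : Set Pt))
    (B : Finset Pt)
    (hconvpos : ∀ p ∈ B, p ∉ convexHull ℝ (↑(B.erase p) : Set Pt))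
    (hgp : GenPos (B ∪ {a, b, c}))
    (hout : ∀ p ∈ B, p ∉ convexHull ℝ ({a, b, c} : Set Pt)) :
    ∃ B1 B2 B3 : Finset Pt,
      B = B1 ∪ B2 ∪ B3 ∧
      Disjoint B1 B2 ∧ Disjoint B1 B3 ∧ Disjoint B2 B3 ∧
      (∀ p ∈ B1, det3 b c p * det3 b c a < 0) ∧
      (∀ p ∈ B2, det3 c a p * det3 c a b < 0) ∧
      (∀ p ∈ B3, det3 a b p * det3 a b c < 0) ∧
      Disjoint (convexHull ℝ (↑B1 : Set Pt)) (convexHull ℝ (↑B2 : Set Pt)) ∧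
      Disjoint (convexHull ℝ (↑B1 : Set Pt)) (convexHull ℝ (↑B3 : Set Pt)) ∧
      Disjoint (convexHull ℝ (↑B2 : Set Pt)) (convexHull ℝ (↑B3 : Set Pt)) ∧
      Disjoint (convexHull ℝ (↑B1 : Set Pt)) (convexHull ℝ ({a, b, c} : Set Pt)) ∧
      Disjoint (convexHull ℝ (↑B2 : Set Pt)) (convexHull ℝ ({a, b, c} : Set Pt)) ∧
      Disjoint (convexHull ℝ (↑B3 : Set Pt)) (convexHull ℝ ({a, b, c} : Set Pt)) :=
  stmt16_general a b c habc B hout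
end
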